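/- Let S be a semiring and μ : Σ_r^* → S^{n×n} a monoid morphism. Define β : {b,c}^* → S^{rn×rn} on generators by β(b) = the block permutation matrix [0_{(r-1)n×n}, I_{(r-1)n}; I_n, 0_{n×(r-1)n}] and β(c) = diag(μ(a_1),...,μ(a_r)). Then for any word v = c^{i_1} b c^{i_2} b ··· c^{i_k} b c^{i_{k+1}} (with k ≥ 0, i_j ≥ 0), one has β(v) = diag(μ(a_1^{i_1} a_2^{i_2} ··· a_{k+1}^{i_{k+1}}), ..., μ(a_r^{i_1} a_{r+1}^{i_2} ··· a_{r+k}^{i_{k+1}})) · β(b)^k, where indices of letters are taken cyclically modulo r. -/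

import Mathlib

open Matrix

/-- The block cyclic shift matrix `[0, I_{(r-1)n}; I_n, 0]`: block `(i, j)` is
the identity iff `j ≡ i+1 (mod r)`. -/
def cycShift (S : Type*) [Semiring S] (r n : ℕ) :
    Matrix (Fin r × Fin n) (Fin r × Fin n) S :=
  Matrix.of fun p q => if (q.1 : ℕ) = ((p.1 : ℕ) + 1) % r ∧ p.2 = q.2 then 1 else 0

/-- The block diagonal matrix `diag(U_1, …, U_r)`. -/
def diagBlk {S : Type*} [Semiring S] {r n : ℕ}
    (U : Fin r → Matrix (Fin n) (Fin n) S) :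
    Matrix (Fin r × Fin n) (Fin r × Fin n) S :=
  Matrix.of fun p q => if p.1 = q.1 then U p.1 p.2 q.2 else 0

/-- The second embedding `β : {b,c}^* → S^{rn×rn}`, with `b = 0 ↦` the block
cyclic shift and `c = 1 ↦ diag(μ(a_1), …, μ(a_r))`. -/
def secondEmb {S : Type*} [Semiring S] {r n : ℕ}
    (μ : FreeMonoid (Fin r) →* Matrix (Fin n) (Fin n) S) :
    FreeMonoid (Fin 2) →* Matrix (Fin r × Fin n) (Fin r × Fin n) S :=
  FreeMonoid.lift fun x =>
    if x = 0 then cycShift S r n else diagBlk fun i => μ (FreeMonoid.of i)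

/-- The word `c^{i_1} b c^{i_2} b ⋯ c^{i_k} b c^{i_{k+1}}` over `{b, c}`,
encoded by the list `L = [i_1, …, i_k]` and the last exponent `e = i_{k+1}`. -/
def expWord (L : List ℕ) (e : ℕ) : FreeMonoid (Fin 2) :=
  (L.map fun i => (FreeMonoid.of (1 : Fin 2)) ^ i * FreeMonoid.of (0 : Fin 2)).prod
    * (FreeMonoid.of (1 : Fin 2)) ^ e

/-- The word `a_m^{i_1} a_{m+1}^{i_2} ⋯ a_{m+k}^{i_{k+1}}` over `Σ_r`, with
letters indexed cyclically modulo `r` (`0`-indexed). -/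
def cycWord {r : ℕ} [NeZero r] (L : List ℕ) (e : ℕ) (m : Fin r) :
    FreeMonoid (Fin r) :=
  (((L ++ [e]).zipIdx.map Prod.swap).map fun te =>
    (FreeMonoid.of (m + (Fin.ofNat r te.1 : Fin r))) ^ te.2).prod

/-! Since `β(b) · diag(U_1, …, U_r) = diag(U_2, …, U_r, U_1) · β(b)`, every `b` of `v` can
be moved to the right end of the product, rotating by one step the letters of each diagonal
factor it passes. -/

section BlockMatrices

variable {S : Type*} [Semiring S] {r n : ℕ}

def diagBlkRingHom :
    (Fin r → Matrix (Fin n) (Fin n) S) →+* Matrix (Fin r × Fin n) (Fin r × Fin n) S :=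
  (reindexRingEquiv S (Equiv.prodComm (Fin n) (Fin r))).toRingHom.comp
    (blockDiagonalRingHom (Fin n) (Fin r) S)

theorem diagBlkRingHom_apply (U : Fin r → Matrix (Fin n) (Fin n) S) :
    diagBlkRingHom U = diagBlk U := by
  ext ⟨i, x⟩ ⟨j, y⟩
  simp [diagBlkRingHom, diagBlk, blockDiagonal_apply]

theorem diagBlk_mul (U V : Fin r → Matrix (Fin n) (Fin n) S) :
    diagBlk U * diagBlk V = diagBlk (U * V) := by
  simp only [← diagBlkRingHom_apply, map_mul]

theorem diagBlk_pow (U : Fin r → Matrix (Fin n) (Fin n) S) (k : ℕ) :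
    diagBlk U ^ k = diagBlk (U ^ k) := by
  simp only [← diagBlkRingHom_apply, map_pow]

variable [NeZero r]

theorem cycShift_eq_toMatrix :
    cycShift S r n =
      ((Equiv.addRight (1 : Fin r)).prodCongr (Equiv.refl (Fin n))).toPEquiv.toMatrix := by
  ext ⟨i, x⟩ ⟨j, y⟩
  have hmod : ((i : ℕ) + 1) % r = ((i + 1 : Fin r) : ℕ) := by
    simp [Fin.val_add, Nat.add_mod]
  simp [cycShift, PEquiv.toMatrix_apply, hmod, Fin.val_eq_val, eq_comm, and_comm]

theorem cycShift_mul_diagBlk (U : Fin r → Matrix (Fin n) (Fin n) S) :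
    cycShift S r n * diagBlk U = diagBlk (fun i => U (i + 1)) * cycShift S r n := by
  rw [cycShift_eq_toMatrix, PEquiv.toMatrix_toPEquiv_mul, PEquiv.mul_toMatrix_toPEquiv]
  ext ⟨i, x⟩ ⟨j, y⟩
  simp [diagBlk, eq_add_neg_iff_add_eq]

end BlockMatrices

section Words

variable {r : ℕ} [NeZero r]

theorem cycWord_nil (e : ℕ) (m : Fin r) : cycWord [] e m = FreeMonoid.of m ^ e := by
  simp [cycWord]

theorem cycWord_cons (i : ℕ) (L : List ℕ) (e : ℕ) (m : Fin r) :
    cycWord (i :: L) e m = FreeMonoid.of m ^ i * cycWord L e (m + 1) := by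
  simp only [cycWord, List.cons_append, List.zipIdx_cons, List.zipIdx_succ (i := 0),
    List.map_cons, List.prod_cons, List.map_map]
  congr 1
  · simp
  · congr 1
    refine List.map_congr_left fun ⟨t, k⟩ _ => ?_
    simp only [Function.comp_apply, Prod.swap_prod_mk, add_assoc]
    congr 3
    ext
    simp [Fin.val_add, Nat.add_mod, Nat.add_comm]

theorem expWord_nil (e : ℕ) : expWord [] e = FreeMonoid.of 1 ^ e := by
  simp [expWord]

theorem expWord_cons (i : ℕ) (L : List ℕ) (e : ℕ) :
    expWord (i :: L) e = FreeMonoid.of 1 ^ i * FreeMonoid.of 0 * expWord L e := by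
  simp [expWord, mul_assoc]

end Words

section SecondEmbedding

variable {S : Type*} [Semiring S] {r n : ℕ}
  (μ : FreeMonoid (Fin r) →* Matrix (Fin n) (Fin n) S)

theorem secondEmb_of_zero : secondEmb μ (FreeMonoid.of 0) = cycShift S r n := by
  simp [secondEmb]

theorem secondEmb_of_one :
    secondEmb μ (FreeMonoid.of 1) = diagBlk fun i => μ (FreeMonoid.of i) := by
  simp [secondEmb]

end SecondEmbedding

/-- Lemma 3.1 (second embedding): for
`v = c^{i_1} b ⋯ c^{i_k} b c^{i_{k+1}}`,
`β(v) = diag(μ(a_1^{i_1}⋯a_{k+1}^{i_{k+1}}), …, μ(a_r^{i_1}⋯a_{r+k}^{i_{k+1}})) ⬝ β(b)^k`,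
with cyclic indexing of the letters. -/
theorem secondEmb_formula {S : Type*} [Semiring S] {r n : ℕ} [NeZero r]
    (μ : FreeMonoid (Fin r) →* Matrix (Fin n) (Fin n) S)
    (L : List ℕ) (e : ℕ) :
    secondEmb μ (expWord L e)
      = diagBlk (fun m => μ (cycWord L e m)) * (cycShift S r n) ^ L.length := by
  induction L with
  | nil =>
    simp only [expWord_nil, cycWord_nil, map_pow, secondEmb_of_one, diagBlk_pow,
      List.length_nil, pow_zero, mul_one, Pi.pow_def]
  | cons i L ih =>
    calc secondEmb μ (expWord (i :: L) e)
        = diagBlk (fun m => μ (FreeMonoid.of m) ^ i) *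
            (cycShift S r n * diagBlk (fun m => μ (cycWord L e m))) *
              cycShift S r n ^ L.length := by
          rw [expWord_cons, map_mul, map_mul, map_pow, secondEmb_of_zero, secondEmb_of_one, ih,
            diagBlk_pow, Pi.pow_def]
          simp only [mul_assoc]
      _ = diagBlk (fun m => μ (cycWord (i :: L) e m)) * cycShift S r n ^ (i :: L).length := by
          rw [cycShift_mul_diagBlk, ← mul_assoc, diagBlk_mul, mul_assoc, ← pow_succ']
          simp only [cycWord_cons, map_mul, map_pow, List.length_cons, Pi.mul_def]
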